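/- Let (X,d,T) be a topological dynamical system and μ a T-invariant Borel probability measure. If μ×μ({(x,y) ∈ X×X : F(x,y) = 0}) = 1, then μ is ergodic, where F is the weak-mean pseudometric. -/

import Mathlib

open Filter Metric Set

variable {X : Type*} [MetricSpace X]

/-- The maximal cardinality of an `(n,δ)`-match of `x` and `y`: an order-preserving
bijection `π : D(π) → R(π)` between subsets of `{0,…,n-1}` such that
`d(T^i x, T^{π i} y) < δ` for all `i ∈ D(π)`, encoded by a pair of strictly
increasing enumerations of `D(π)` and `R(π)`. -/
noncomputable def fkFit (T : X → X) (n : ℕ) (δ : ℝ) (x y : X) : ℕ :=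
  sSup {k : ℕ | ∃ i j : Fin k → Fin n, StrictMono i ∧ StrictMono j ∧
    ∀ s, dist (T^[(i s : ℕ)] x) (T^[(j s : ℕ)] y) < δ}

/-- `f̄_{n,δ}(x,y) = 1 - (max match)/n`. -/
noncomputable def fkF (T : X → X) (n : ℕ) (δ : ℝ) (x y : X) : ℝ :=
  1 - (fkFit T n δ x y : ℝ) / n

/-- The Feldman–Katok metric `d_{FK_n}`. -/
noncomputable def dFKn (T : X → X) (n : ℕ) (x y : X) : ℝ :=
  sInf {δ : ℝ | 0 < δ ∧ fkF T n δ x y < δ}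

/-- The Feldman–Katok pseudometric `d_{FK}`. -/
noncomputable def dFK (T : X → X) (x y : X) : ℝ :=
  sInf {δ : ℝ | 0 < δ ∧ Filter.limsup (fun n => fkF T n δ x y) atTop < δ}

/-- The maximal cardinality of an `(n,δ)*`-match of `x` and `y`: a not necessarily
order-preserving bijection `π : D(π) → R(π)` between subsets of `{0,…,n-1}` with
`d(T^i x, T^{π i} y) < δ` on its domain, encoded by a pair of injections. -/
noncomputable def wFit (T : X → X) (n : ℕ) (δ : ℝ) (x y : X) : ℕ :=
  sSup {k : ℕ | ∃ i j : Fin k → Fin n, Function.Injective i ∧ Function.Injective j ∧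
    ∀ s, dist (T^[(i s : ℕ)] x) (T^[(j s : ℕ)] y) < δ}

/-- `f̃_{n,δ}(x,y) = 1 - (max match)/n`. -/
noncomputable def wFbar (T : X → X) (n : ℕ) (δ : ℝ) (x y : X) : ℝ :=
  1 - (wFit T n δ x y : ℝ) / n

/-- The Feldman–Katok pseudometric without the order-preserving requirement. -/
noncomputable def dFKt (T : X → X) (x y : X) : ℝ :=
  sInf {δ : ℝ | 0 < δ ∧ Filter.limsup (fun n => wFbar T n δ x y) atTop < δ}

/-- `F_n(x,y) = (1/n) inf_{σ ∈ S_n} ∑_{k<n} d(T^k x, T^{σ k} y)`. -/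
noncomputable def weakMeanN (T : X → X) (n : ℕ) (x y : X) : ℝ :=
  (1 / n : ℝ) * ⨅ σ : Equiv.Perm (Fin n),
    ∑ k : Fin n, dist (T^[(k : ℕ)] x) (T^[(σ k : ℕ)] y)

/-- The weak-mean pseudometric `F(x,y) = limsup_n F_n(x,y)`. -/
noncomputable def weakMean (T : X → X) (x y : X) : ℝ :=
  Filter.limsup (fun n => weakMeanN T n x y) Filter.atTop

open MeasureTheory

/-! The Birkhoff sums of `y` are invariant under permuting the times `0, …, n-1`, so for a
`K`-Lipschitz `f` the Birkhoff averages satisfy `|Aₙf x - Aₙf y| ≤ K Fₙ(x,y)`. If `ν₁, ν₂` are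
invariant probability measures with `F = 0` `ν₁ × ν₂`-a.e., integrating this over `ν₁ × ν₂` and
letting `n → ∞` (dominated convergence, `Fₙ ≤ diam X`) gives `∫ f dν₁ = ∫ f dν₂` for every
Lipschitz `f`, hence `ν₁ = ν₂`. Now if `μ = a ν₁ + b ν₂` is a proper convex combination of
invariant probability measures, then `ν₁ × ν₂ ≪ μ × μ`, so `ν₁ = ν₂ = μ`: `μ` is an extreme point
of the invariant probability measures, i.e. ergodic. -/

open scoped Topology NNReal

section WeakMean

variable (T : X → X)

theorem weakMeanN_nonneg (n : ℕ) (x y : X) : 0 ≤ weakMeanN T n x y :=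
  mul_nonneg (by positivity) (le_ciInf fun _ => Finset.sum_nonneg fun _ _ => dist_nonneg)

theorem weakMeanN_le_diam [CompactSpace X] (n : ℕ) (x y : X) :
    weakMeanN T n x y ≤ diam (univ : Set X) := by
  rcases Nat.eq_zero_or_pos n with rfl | hn
  · simp [weakMeanN, diam_nonneg]
  have hbdd : BddBelow (range fun σ : Equiv.Perm (Fin n) =>
      ∑ k : Fin n, dist (T^[(k : ℕ)] x) (T^[(σ k : ℕ)] y)) :=
    ⟨0, by rintro _ ⟨σ, rfl⟩; exact Finset.sum_nonneg fun _ _ => dist_nonneg⟩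
  have hsum : ∑ k : Fin n, dist (T^[(k : ℕ)] x) (T^[((1 : Equiv.Perm (Fin n)) k : ℕ)] y)
      ≤ n * diam (univ : Set X) := by
    calc _ ≤ ∑ _k : Fin n, diam (univ : Set X) := Finset.sum_le_sum fun _ _ =>
          dist_le_diam_of_mem isCompact_univ.isBounded (mem_univ _) (mem_univ _)
      _ = n * diam (univ : Set X) := by simp
  rw [weakMeanN, one_div, inv_mul_le_iff₀ (by positivity)]
  exact (ciInf_le hbdd 1).trans hsum

theorem norm_weakMeanN_le_diam [CompactSpace X] (n : ℕ) (x y : X) :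
    ‖weakMeanN T n x y‖ ≤ diam (univ : Set X) := by
  rw [Real.norm_of_nonneg (weakMeanN_nonneg T n x y)]
  exact weakMeanN_le_diam T n x y

theorem tendsto_weakMeanN_of_weakMean_eq_zero [CompactSpace X] {x y : X}
    (h : weakMean T x y = 0) : Tendsto (fun n => weakMeanN T n x y) atTop (𝓝 0) := by
  have hle : IsBoundedUnder (· ≤ ·) atTop fun n => weakMeanN T n x y :=
    isBoundedUnder_of ⟨_, fun n => weakMeanN_le_diam T n x y⟩
  refine tendsto_of_le_liminf_of_limsup_le ?_ h.le hle
    (isBoundedUnder_of ⟨0, fun n => weakMeanN_nonneg T n x y⟩)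
  exact le_liminf_of_le hle.isCoboundedUnder_ge (.of_forall fun n => weakMeanN_nonneg T n x y)

theorem dist_birkhoffAverage_le_weakMeanN {K : ℝ≥0} {f : X → ℝ} (hf : LipschitzWith K f)
    (n : ℕ) (x y : X) :
    dist (birkhoffAverage ℝ T f n x) (birkhoffAverage ℝ T f n y) ≤ K * weakMeanN T n x y := by
  obtain ⟨σ, hσ⟩ := exists_eq_ciInf_of_finite (f := fun σ : Equiv.Perm (Fin n) =>
    ∑ k : Fin n, dist (T^[(k : ℕ)] x) (T^[(σ k : ℕ)] y))
  have hsum : dist (birkhoffSum T f n x) (birkhoffSum T f n y)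
      ≤ K * ∑ k : Fin n, dist (T^[(k : ℕ)] x) (T^[(σ k : ℕ)] y) := by
    have hy : birkhoffSum T f n y = ∑ k : Fin n, f (T^[(σ k : ℕ)] y) := by
      rw [birkhoffSum, Finset.sum_range, Equiv.sum_comp σ fun k : Fin n => f (T^[(k : ℕ)] y)]
    rw [hy, birkhoffSum, Finset.sum_range, dist_eq_norm, ← Finset.sum_sub_distrib,
      Finset.mul_sum]
    refine (norm_sum_le _ _).trans (Finset.sum_le_sum fun k _ => ?_)
    rw [← dist_eq_norm]
    exact hf.dist_le_mul _ _
  rw [birkhoffAverage, birkhoffAverage, dist_smul₀, weakMeanN, ← hσ, norm_inv,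
    Real.norm_natCast]
  calc (n : ℝ)⁻¹ * dist (birkhoffSum T f n x) (birkhoffSum T f n y)
      ≤ (n : ℝ)⁻¹ * (K * ∑ k : Fin n, dist (T^[(k : ℕ)] x) (T^[(σ k : ℕ)] y)) := by gcongr
    _ = _ := by ring

end WeakMean

section Measurability

variable [MeasurableSpace X] [BorelSpace X] {T : X → X}

theorem measurable_weakMeanN [SecondCountableTopology X] (hT : Measurable T) (n : ℕ) :
    Measurable fun p : X × X => weakMeanN T n p.1 p.2 :=
  .const_mul (.iInf fun _ => Finset.measurable_sum _ fun _ _ =>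
    ((hT.iterate _).comp measurable_fst).dist ((hT.iterate _).comp measurable_snd)) _

theorem measurable_weakMean [SecondCountableTopology X] (hT : Measurable T) :
    Measurable fun p : X × X => weakMean T p.1 p.2 :=
  .limsup (measurable_weakMeanN hT)

theorem integrable_weakMeanN [CompactSpace X] (hT : Measurable T) {ρ : Measure (X × X)}
    [IsFiniteMeasure ρ] (n : ℕ) : Integrable (fun p : X × X => weakMeanN T n p.1 p.2) ρ :=
  .of_bound (measurable_weakMeanN hT n).aestronglyMeasurable (diam (univ : Set X))
    (.of_forall fun p => norm_weakMeanN_le_diam T n p.1 p.2)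

theorem tendsto_integral_weakMeanN [CompactSpace X] (hT : Measurable T) {ρ : Measure (X × X)}
    [IsFiniteMeasure ρ] (h : ∀ᵐ p ∂ρ, weakMean T p.1 p.2 = 0) :
    Tendsto (fun n => ∫ p, weakMeanN T n p.1 p.2 ∂ρ) atTop (𝓝 0) := by
  simpa using tendsto_integral_of_dominated_convergence (fun _ => diam (univ : Set X))
    (fun n => (measurable_weakMeanN hT n).aestronglyMeasurable) (integrable_const _)
    (fun n => .of_forall fun p => norm_weakMeanN_le_diam T n p.1 p.2)
    (h.mono fun p hp => tendsto_weakMeanN_of_weakMean_eq_zero T hp)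

end Measurability

namespace MeasureTheory.MeasurePreserving

variable {α E : Type*} [MeasurableSpace α] [NormedAddCommGroup E] [NormedSpace ℝ E]
  {ν : Measure α} {T : α → α} {f : α → E}

theorem integral_comp_of_aestronglyMeasurable (hT : MeasurePreserving T ν ν)
    (hf : AEStronglyMeasurable f ν) : ∫ x, f (T x) ∂ν = ∫ x, f x ∂ν := by
  rw [← integral_map hT.measurable.aemeasurable (by rwa [hT.map_eq]), hT.map_eq]

theorem integral_birkhoffSum (hT : MeasurePreserving T ν ν) (hf : Integrable f ν) (n : ℕ) :
    ∫ x, birkhoffSum T f n x ∂ν = n • ∫ x, f x ∂ν := by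
  simp only [birkhoffSum]
  rw [integral_finsetSum (f := fun k x => f (T^[k] x)) _
    fun k _ => (hT.iterate k).integrable_comp_of_integrable hf]
  simp [(hT.iterate _).integral_comp_of_aestronglyMeasurable hf.1]

theorem integrable_birkhoffAverage (hT : MeasurePreserving T ν ν) (hf : Integrable f ν) (n : ℕ) :
    Integrable (birkhoffAverage ℝ T f n) ν :=
  (integrable_finsetSum _ fun k _ => (hT.iterate k).integrable_comp_of_integrable hf).smul
    (n : ℝ)⁻¹

theorem integral_birkhoffAverage (hT : MeasurePreserving T ν ν) (hf : Integrable f ν) {n : ℕ}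
    (hn : n ≠ 0) : ∫ x, birkhoffAverage ℝ T f n x ∂ν = ∫ x, f x ∂ν := by
  simp only [birkhoffAverage]
  rw [integral_smul, hT.integral_birkhoffSum hf, ← Nat.cast_smul_eq_nsmul ℝ, smul_smul,
    inv_mul_cancel₀ (by simpa), one_smul]

end MeasureTheory.MeasurePreserving

theorem MeasureTheory.Measure.ext_of_forall_integral_lipschitzWith_eq {Ω : Type*}
    [PseudoEMetricSpace Ω] [MeasurableSpace Ω] [BorelSpace Ω] {μ ν : Measure Ω}
    [IsFiniteMeasure μ] [IsFiniteMeasure ν]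
    (h : ∀ (K : ℝ≥0) (f : Ω → ℝ), LipschitzWith K f → ∫ x, f x ∂μ = ∫ x, f x ∂ν) : μ = ν := by
  -- Thickened indicators of a closed set `F` are Lipschitz and decrease to the indicator of `F`.
  have hclosed : ∀ F : Set Ω, IsClosed F → μ F = ν F := by
    intro F hF
    have hδ : ∀ n : ℕ, (0 : ℝ) < 1 / (n + 1) := fun _ => Nat.one_div_pos_of_nat
    have hμ := tendsto_integral_thickenedIndicator_of_isClosed μ hF hδ
      tendsto_one_div_add_atTop_nhds_zero_nat
    have hν := tendsto_integral_thickenedIndicator_of_isClosed ν hF hδ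
      tendsto_one_div_add_atTop_nhds_zero_nat
    have hint : (fun n : ℕ => ∫ x, (thickenedIndicator (hδ n) F x : ℝ) ∂μ)
        = fun n => ∫ x, (thickenedIndicator (hδ n) F x : ℝ) ∂ν := funext fun n =>
      h _ _ (NNReal.isometry_coe.lipschitz.comp (lipschitzWith_thickenedIndicator (hδ n) F))
    rw [hint] at hμ
    exact (measureReal_eq_measureReal_iff (by finiteness) (by finiteness)).1
      (tendsto_nhds_unique hμ hν)
  exact ext_of_generate_finite _ (BorelSpace.measurable_eq.trans borel_eq_generateFrom_isClosed)
    isPiSystem_isClosed (fun F hF => hclosed F hF) (hclosed _ isClosed_univ)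

section InvariantMeasures

variable [MeasurableSpace X] [BorelSpace X] [CompactSpace X] {T : X → X} {ν₁ ν₂ : Measure X}
  [IsProbabilityMeasure ν₁] [IsProbabilityMeasure ν₂]

theorem integral_eq_of_ae_weakMean_eq_zero (h₁ : MeasurePreserving T ν₁ ν₁)
    (h₂ : MeasurePreserving T ν₂ ν₂) (h : ∀ᵐ p ∂ν₁.prod ν₂, weakMean T p.1 p.2 = 0)
    {K : ℝ≥0} {f : X → ℝ} (hf : LipschitzWith K f) : ∫ x, f x ∂ν₁ = ∫ x, f x ∂ν₂ := by
  have hfi : ∀ (ν : Measure X) [IsFiniteMeasure ν], Integrable f ν := fun _ _ =>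
    hf.continuous.integrable_of_hasCompactSupport (HasCompactSupport.of_compactSpace f)
  have hbound : ∀ n ≠ 0, |∫ x, f x ∂ν₁ - ∫ x, f x ∂ν₂|
      ≤ K * ∫ p, weakMeanN T n p.1 p.2 ∂ν₁.prod ν₂ := by
    intro n hn
    have hA₁ := h₁.integrable_birkhoffAverage (hfi ν₁) n
    have hA₂ := h₂.integrable_birkhoffAverage (hfi ν₂) n
    have hdiff : ∫ x, f x ∂ν₁ - ∫ x, f x ∂ν₂ = ∫ p, (birkhoffAverage ℝ T f n p.1
        - birkhoffAverage ℝ T f n p.2) ∂ν₁.prod ν₂ := by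
      rw [integral_sub (hA₁.comp_fst ν₂) (hA₂.comp_snd ν₁), integral_fun_fst, integral_fun_snd,
        h₁.integral_birkhoffAverage (hfi ν₁) hn, h₂.integral_birkhoffAverage (hfi ν₂) hn]
      simp
    rw [hdiff, ← integral_const_mul, ← Real.norm_eq_abs]
    refine norm_integral_le_of_norm_le
      ((integrable_weakMeanN (ρ := ν₁.prod ν₂) h₁.measurable n).const_mul _)
      (.of_forall fun p => ?_)
    rw [← dist_eq_norm]
    exact dist_birkhoffAverage_le_weakMeanN T hf n p.1 p.2
  have hlim := (tendsto_integral_weakMeanN h₁.measurable h).const_mul (K : ℝ)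
  rw [mul_zero] at hlim
  have hzero : |∫ x, f x ∂ν₁ - ∫ x, f x ∂ν₂| ≤ 0 :=
    ge_of_tendsto hlim (eventually_atTop.2 ⟨1, fun n hn => hbound n (by omega)⟩)
  exact sub_eq_zero.1 (abs_nonpos_iff.1 hzero)

theorem eq_of_ae_weakMean_eq_zero (h₁ : MeasurePreserving T ν₁ ν₁)
    (h₂ : MeasurePreserving T ν₂ ν₂) (h : ∀ᵐ p ∂ν₁.prod ν₂, weakMean T p.1 p.2 = 0) :
    ν₁ = ν₂ :=
  Measure.ext_of_forall_integral_lipschitzWith_eq fun _ _ hf =>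
    integral_eq_of_ae_weakMean_eq_zero h₁ h₂ h hf

end InvariantMeasures

theorem ergodic_of_weakMean_zero_general [MeasurableSpace X] [BorelSpace X] [CompactSpace X]
    (T : X → X) (μ : Measure X) [IsProbabilityMeasure μ]
    (hμ : MeasurePreserving T μ μ)
    (h : μ.prod μ {p : X × X | weakMean T p.1 p.2 = 0} = 1) :
    Ergodic T μ := by
  have hmeas : MeasurableSet {p : X × X | weakMean T p.1 p.2 = 0} :=
    measurable_weakMean hμ.measurable (measurableSet_singleton 0)
  have hae : ∀ᵐ p ∂μ.prod μ, weakMean T p.1 p.2 = 0 :=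
    (ae_iff_measure_eq hmeas.nullMeasurableSet).2 (h.trans measure_univ.symm)
  refine .of_mem_extremePoints (mem_extremePoints_iff_left.2 ⟨⟨hμ, inferInstance⟩, ?_⟩)
  rintro ν₁ ⟨hν₁, _⟩ ν₂ ⟨hν₂, _⟩ ⟨a, b, ha, hb, hab, rfl⟩
  have hac₁ : ν₁ ≪ a • ν₁ + b • ν₂ := (Measure.absolutelyContinuous_smul ha.ne').add_right _
  have hac₂ : ν₂ ≪ a • ν₁ + b • ν₂ := (Measure.absolutelyContinuous_smul hb.ne').add_right' _
  have h₁₂ : ν₁ = ν₂ := eq_of_ae_weakMean_eq_zero hν₁ hν₂ ((hac₁.prod hac₂).ae_le hae)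
  rw [← h₁₂, ← add_smul, hab, one_smul]

/-- If `μ × μ`-almost every pair of points is at weak-mean distance `0`, then `μ`
is ergodic. -/
theorem ergodic_of_weakMean_zero [MeasurableSpace X] [BorelSpace X] [CompactSpace X]
    (T : X → X) (hT : Continuous T) (μ : Measure X) [IsProbabilityMeasure μ]
    (hμ : MeasurePreserving T μ μ)
    (h : μ.prod μ {p : X × X | weakMean T p.1 p.2 = 0} = 1) :
    Ergodic T μ :=
  ergodic_of_weakMean_zero_general T μ hμ h
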